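/- arXiv:2412.03236 — 2 statements merged into one kernel-verified Lean document; each statement's English description precedes it below -/
import Mathlib

section
/- For a finite ranked poset P of rank k ≥ 2 with least and greatest elements, and any j ≥ 1, the number of quilts of type (P, A_2(j)) equals the sum over all convex cut sets C ⊆ P \ {0̂_P, 1̂_P} of α_P(C)^j, where α_P(C) is the number of antichains contained in C. -/
/-- A quilt of alternating sign matrices of type `(P, Q)`, with respect to given rank
functions `rkP`, `rkQ`: a map `f : P × Q → ℕ` vanishing when either coordinate is the
least element, taking the value `min (rank P) (rank Q)` at `(⊤, ⊤)`, and satisfying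
Boolean growth along each cover relation of the product poset `P × Q`. -/
def IsQuilt {P Q : Type*} [PartialOrder P] [BoundedOrder P] [PartialOrder Q] [BoundedOrder Q]
    (rkP : P → ℕ) (rkQ : Q → ℕ) (f : P → Q → ℕ) : Prop :=
  (∀ y, f ⊥ y = 0) ∧
  (∀ x, f x ⊥ = 0) ∧
  f ⊤ ⊤ = min (rkP ⊤) (rkQ ⊤) ∧
  (∀ a b : P × Q, a ⋖ b → f b.1 b.2 = f a.1 a.2 ∨ f b.1 b.2 = f a.1 a.2 + 1)

/-- A type carrying `j` pairwise incomparable elements (the discrete order on `Fin j`). -/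
structure DiscFin (j : ℕ) where
  val : Fin j

instance {j : ℕ} : PartialOrder (DiscFin j) where
  le a b := a = b
  le_refl _ := rfl
  le_trans _ _ _ h h' := Eq.trans (α := DiscFin j) h h'
  le_antisymm _ _ h _ := h

/-- The antichain poset `A₂(j)`: a least element `⊥` of rank 0, `j` pairwise
incomparable elements of rank 1, and a greatest element `⊤` of rank 2. -/
abbrev A2 (j : ℕ) := WithBot (WithTop (DiscFin j))

/-- The rank function of `A₂(j)`. -/
def rkA2 (j : ℕ) : A2 j → ℕ :=
  WithBot.recBotCoe 0 (WithTop.recTopCoe 2 fun _ => 1)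

/-- The rank-one element of `A₂(j)` indexed by `y : Fin j`. -/
def a2mid {j : ℕ} (y : Fin j) : A2 j :=
  ((((⟨y⟩ : DiscFin j) : WithTop (DiscFin j))) : A2 j)

/-!
A quilt `f` of type `(P, A₂(j))` is determined by its columns. The column `g = f(·, 1̂)` climbs
from `0` to `2` in steps of at most one along covers, so by a discrete intermediate value argument
every maximal chain meets `C = g⁻¹(1)`, a convex cut set; conversely `g` is recovered from `C` as
`0` below `C`, `1` on `C` and `2` elsewhere. The column of a rank-one element `y` is `0`/`1`-valued,
monotone and squeezed between `g - 1` and `g`, so it is encoded by the order filter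
`{x ∈ C | f(x, y) = 1}` of `C`, which may be chosen freely. Order filters of `C` correspond to their
sets of minimal elements, that is, to antichains in `C`.
-/

lemma DiscFin.le_iff_eq {j : ℕ} {a b : DiscFin j} : a ≤ b ↔ a = b := Iff.rfl

namespace A2

variable {j : ℕ}

lemma cases (q : A2 j) : q = ⊥ ∨ q = ⊤ ∨ ∃ y, q = a2mid y := by
  induction q using WithBot.recBotCoe with
  | bot => exact Or.inl rfl
  | coe w =>
    induction w using WithTop.recTopCoe with
    | top => exact Or.inr (Or.inl rfl)
    | coe d => exact Or.inr (Or.inr ⟨d.val, rfl⟩)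

lemma bot_covBy_mid (y : Fin j) : (⊥ : A2 j) ⋖ a2mid y :=
  WithBot.bot_covBy_coe.2 fun w hw => by
    induction w using WithTop.recTopCoe with
    | top => exact absurd hw (WithTop.coe_lt_top _).not_ge
    | coe => exact WithTop.coe_le_coe.2 (DiscFin.le_iff_eq.1 (WithTop.coe_le_coe.1 hw)).ge

lemma mid_covBy_top (y : Fin j) : a2mid y ⋖ ⊤ :=
  WithBot.coe_covBy_coe.2 <| WithTop.coe_covBy_top.2 fun _ hd => (DiscFin.le_iff_eq.1 hd).ge

lemma covBy_cases (hj : 1 ≤ j) {q q' : A2 j} (h : q ⋖ q') :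
    (q = ⊥ ∧ ∃ y, q' = a2mid y) ∨ ((∃ y, q = a2mid y) ∧ q' = ⊤) := by
  rcases cases q with rfl | rfl | ⟨y, rfl⟩ <;> rcases cases q' with rfl | rfl | ⟨y', rfl⟩
  · exact absurd h.lt (lt_irrefl _)
  · exact absurd (bot_covBy_mid ⟨0, hj⟩).lt (h.2 · (mid_covBy_top ⟨0, hj⟩).lt)
  · exact Or.inl ⟨rfl, y', rfl⟩
  · exact absurd h.lt not_top_lt
  · exact absurd h.lt not_top_lt
  · exact absurd h.lt not_top_lt
  · exact absurd h.lt not_lt_bot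
  · exact Or.inr ⟨⟨y, rfl⟩, rfl⟩
  · have hlt := WithTop.coe_lt_coe.1 (WithBot.coe_lt_coe.1 h.lt)
    exact (hlt.ne (DiscFin.le_iff_eq.1 hlt.le)).elim

end A2

section Chains

variable {α : Type*} [PartialOrder α] {s : Set α} {a b : α}

lemma Finite.monotone_of_forall_covBy [Finite α] {β : Type*} [Preorder β] {f : α → β}
    (h : ∀ a b : α, a ⋖ b → f a ≤ f b) : Monotone f := by
  classical
  have := Fintype.ofFinite α
  have := Fintype.toLocallyFiniteOrder (α := α)
  exact (monotone_iff_forall_covBy f).2 h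

lemma IsMaxChain.covBy_of_forall_le_or_le (hs : IsMaxChain (· ≤ ·) s) (hab : a < b)
    (h : ∀ z ∈ s, z ≤ a ∨ b ≤ z) : a ⋖ b := by
  refine ⟨hab, fun c hac hcb => ?_⟩
  have hchain : IsChain (· ≤ ·) (insert c s) := hs.isChain.insert fun z hz _ =>
    (h z hz).elim (fun hza => Or.inr (hza.trans hac.le)) (fun hbz => Or.inl (hcb.le.trans hbz))
  have hc : c ∈ s := (hs.2 hchain (Set.subset_insert c s)) ▸ Set.mem_insert c s
  exact (h c hc).elim hac.not_ge hcb.not_ge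

lemma IsChain.le_or_le_of_covBy (hs : IsChain (· ≤ ·) s) (ha : a ∈ s) (hb : b ∈ s)
    (hab : a ⋖ b) {z : α} (hz : z ∈ s) : z ≤ a ∨ b ≤ z := by
  rcases hs.total hz ha with hza | haz
  · exact Or.inl hza
  rcases hs.total hz hb with hzb | hbz
  · exact (hab.eq_or_eq haz hzb).imp le_of_eq ge_of_eq
  · exact Or.inr hbz

lemma exists_isMaxChain_mem_mem (hab : a ≤ b) :
    ∃ s : Set α, IsMaxChain (· ≤ ·) s ∧ a ∈ s ∧ b ∈ s := by
  obtain ⟨s, hs, hsub⟩ := (IsChain.pair hab).exists_maxChain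
  exact ⟨s, hs, hsub (by simp), hsub (by simp)⟩

/-- The last element of `s` below level `n` is covered by the first one at level `≥ n`. -/
lemma IsMaxChain.exists_eq_of_covBy_le_add_one [Finite α] (hs : IsMaxChain (· ≤ ·) s)
    {g : α → ℕ} (hg : Monotone g) (hstep : ∀ a b, a ⋖ b → g b ≤ g a + 1)
    (ha : a ∈ s) (hb : b ∈ s) {n : ℕ} (han : g a ≤ n) (hnb : n ≤ g b) :
    ∃ z ∈ s, g z = n := by
  rcases han.eq_or_lt with rfl | han
  · exact ⟨a, ha, rfl⟩
  obtain ⟨a', -, ⟨ha's, ha'n⟩, ha'max⟩ :=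
    exists_maximal_ge_of_wellFoundedGT (fun z => z ∈ s ∧ g z < n) a ⟨ha, han⟩
  obtain ⟨b', -, ⟨hb's, hb'n⟩, hb'min⟩ :=
    exists_minimal_le_of_wellFoundedLT (fun z => z ∈ s ∧ n ≤ g z) b ⟨hb, hnb⟩
  have hsplit : ∀ z ∈ s, z ≤ a' ∨ b' ≤ z := by
    intro z hz
    rcases lt_or_ge (g z) n with hzn | hzn
    · exact Or.inl ((hs.isChain.total hz ha's).elim id (ha'max ⟨hz, hzn⟩))
    · exact Or.inr ((hs.isChain.total hz hb's).elim (hb'min ⟨hz, hzn⟩) id)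
  have hlt : a' < b' := by
    rcases hs.isChain.total ha's hb's with h | h
    · exact h.lt_of_ne (by rintro rfl; omega)
    · exact absurd (hg h) (by omega)
  have := hstep a' b' (hs.covBy_of_forall_le_or_le hlt hsplit)
  exact ⟨b', hb's, by omega⟩

end Chains

section CutLevel

variable {P : Type*} [PartialOrder P]

open scoped Classical in
noncomputable def cutLevel (C : Finset P) (x : P) : ℕ :=
  if x ∈ C then 1 else if ∃ c ∈ C, x ≤ c then 0 else 2

lemma cutLevel_cases (C : Finset P) (x : P) :
    (x ∈ C ∧ cutLevel C x = 1) ∨ (x ∉ C ∧ (∃ c ∈ C, x ≤ c) ∧ cutLevel C x = 0) ∨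
      ((¬∃ c ∈ C, x ≤ c) ∧ cutLevel C x = 2) := by
  unfold cutLevel
  split_ifs <;> simp_all

lemma cutLevel_eq_one_iff {C : Finset P} {x : P} : cutLevel C x = 1 ↔ x ∈ C := by
  rcases cutLevel_cases C x with ⟨hx, h⟩ | ⟨hx, -, h⟩ | ⟨hx, h⟩
  · simp [hx, h]
  · simp [hx, h]
  · simp only [h, OfNat.ofNat_ne_one, false_iff]
    exact fun hxC => hx ⟨x, hxC, le_rfl⟩

end CutLevel

section ConvexCut

variable {P : Type*} [PartialOrder P] [BoundedOrder P]

structure IsConvexCut (C : Finset P) : Prop where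
  bot_notMem : ⊥ ∉ C
  top_notMem : ⊤ ∉ C
  convex : ∀ x z y : P, x ∈ C → y ∈ C → x ≤ z → z ≤ y → z ∈ C
  meets_maxChain : ∀ S : Set P, IsMaxChain (· ≤ ·) S → ∃ z ∈ S, z ∈ C

lemma isConvexCut_iff (C : Finset P) :
    IsConvexCut C ↔ (⊥ : P) ∉ C ∧ (⊤ : P) ∉ C ∧
      (∀ x z y : P, x ∈ C → y ∈ C → x ≤ z → z ≤ y → z ∈ C) ∧
      (∀ S : Set P, IsMaxChain (· ≤ ·) S → ∃ z ∈ S, z ∈ C) :=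
  ⟨fun ⟨h₁, h₂, h₃, h₄⟩ => ⟨h₁, h₂, h₃, h₄⟩, fun ⟨h₁, h₂, h₃, h₄⟩ => ⟨h₁, h₂, h₃, h₄⟩⟩

lemma IsConvexCut.exists_le_of_covBy {C : Finset P} (hC : IsConvexCut C) {a b c : P}
    (hab : a ⋖ b) (ha : a ∉ C) (hc : c ∈ C) (hac : a ≤ c) : ∃ c ∈ C, b ≤ c := by
  obtain ⟨S, hS, haS, hbS⟩ := exists_isMaxChain_mem_mem hab.le
  obtain ⟨z, hzS, hzC⟩ := hC.meets_maxChain S hS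
  rcases hS.isChain.le_or_le_of_covBy haS hbS hab hzS with hza | hbz
  · exact absurd (hC.convex z a c hzC hc hza hac) ha
  · exact ⟨z, hzC, hbz⟩

/-- The shape of the column `x ↦ f x ⊤` of a quilt of type `(P, A₂(j))`. -/
structure IsLevelFunction (g : P → ℕ) : Prop where
  map_bot : g ⊥ = 0
  map_top : g ⊤ = 2
  covBy : ∀ a b, a ⋖ b → g b = g a ∨ g b = g a + 1

lemma IsConvexCut.isLevelFunction_cutLevel {C : Finset P} (hC : IsConvexCut C) :
    IsLevelFunction (cutLevel C) where
  map_bot := by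
    obtain ⟨c, -, hc⟩ := hC.meets_maxChain _ maxChain_spec
    rcases cutLevel_cases C ⊥ with ⟨h, -⟩ | ⟨-, -, h⟩ | ⟨h, -⟩
    · exact absurd h hC.bot_notMem
    · exact h
    · exact absurd ⟨c, hc, bot_le⟩ h
  map_top := by
    rcases cutLevel_cases C ⊤ with ⟨h, -⟩ | ⟨-, ⟨c, hc, htc⟩, -⟩ | ⟨-, h⟩
    · exact absurd h hC.top_notMem
    · exact absurd (top_le_iff.1 htc ▸ hc) hC.top_notMem
    · exact h
  covBy a b hab := by
    rcases cutLevel_cases C a with ⟨ha, ha1⟩ | ⟨ha, ⟨c, hc, hac⟩, ha0⟩ | ⟨ha, ha2⟩ <;>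
      rcases cutLevel_cases C b with ⟨hb, hb1⟩ | ⟨hb, ⟨c', hc', hbc'⟩, hb0⟩ | ⟨hb, hb2⟩ <;>
      first | omega | exfalso
    · exact hb (hC.convex a b c' ha hc' hab.le hbc')
    · exact hb (hC.exists_le_of_covBy hab ha hc hac)
    · exact ha ⟨b, hb, hab.le⟩
    · exact ha ⟨c', hc', hab.le.trans hbc'⟩

variable {g : P → ℕ}

lemma IsLevelFunction.monotone [Finite P] (hg : IsLevelFunction g) : Monotone g :=
  Finite.monotone_of_forall_covBy fun a b hab => by rcases hg.covBy a b hab with h | h <;> omega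

lemma IsLevelFunction.le_two [Finite P] (hg : IsLevelFunction g) (x : P) : g x ≤ 2 :=
  hg.map_top ▸ hg.monotone le_top

lemma IsLevelFunction.exists_mem_eq_one [Finite P] (hg : IsLevelFunction g) {S : Set P}
    (hS : IsMaxChain (· ≤ ·) S) {x : P} (hx : x ∈ S) (hgx : g x ≤ 1) : ∃ z ∈ S, g z = 1 :=
  hS.exists_eq_of_covBy_le_add_one hg.monotone
    (fun a b hab => by rcases hg.covBy a b hab with h | h <;> omega)
    hx hS.top_mem hgx (by rw [hg.map_top]; omega)

lemma IsLevelFunction.isConvexCut [Fintype P] (hg : IsLevelFunction g) :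
    IsConvexCut {x | g x = 1} where
  bot_notMem := by simp [hg.map_bot]
  top_notMem := by simp [hg.map_top]
  convex x z y hx hy hxz hzy := by
    simp only [Finset.mem_filter, Finset.mem_univ, true_and] at hx hy ⊢
    have := hg.monotone hxz
    have := hg.monotone hzy
    omega
  meets_maxChain S hS := by
    obtain ⟨z, hzS, hz⟩ := hg.exists_mem_eq_one hS hS.bot_mem (by rw [hg.map_bot]; omega)
    exact ⟨z, hzS, by simpa using hz⟩

lemma IsLevelFunction.cutLevel_eq [Fintype P] (hg : IsLevelFunction g) :
    cutLevel {x | g x = 1} = g := by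
  funext x
  have hmono := hg.monotone
  have hle := hg.le_two x
  rcases cutLevel_cases {x | g x = 1} x with ⟨hx, h⟩ | ⟨hx, ⟨c, hc, hxc⟩, h⟩ | ⟨hx, h⟩ <;> rw [h]
  · exact ((Finset.mem_filter_univ _).1 hx).symm
  · have := hmono hxc
    have := (Finset.mem_filter_univ _).1 hc
    have := mt (Finset.mem_filter_univ _).2 hx
    omega
  · by_contra hne
    obtain ⟨S, hS, hxS, -⟩ := exists_isMaxChain_mem_mem (le_refl x)
    obtain ⟨z, hzS, hz⟩ := hg.exists_mem_eq_one hS hxS (by omega)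
    rcases hS.isChain.total hxS hzS with hxz | hzx
    · exact hx ⟨z, (Finset.mem_filter_univ _).2 hz, hxz⟩
    · have := hmono hzx
      exact hx ⟨x, (Finset.mem_filter_univ _).2 (by omega), le_rfl⟩

end ConvexCut

section QuiltOfCut

variable {P : Type*} [PartialOrder P] {j : ℕ}

open scoped Classical in
noncomputable def quiltOfCut (C : Finset P) (F : Fin j → Finset P) (x : P) : A2 j → ℕ :=
  WithBot.recBotCoe 0 <| WithTop.recTopCoe (cutLevel C x) fun d =>
    if x ∈ F d.val ∨ cutLevel C x = 2 then 1 else 0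

variable {C : Finset P} {F : Fin j → Finset P}

@[simp] lemma quiltOfCut_bot (x : P) : quiltOfCut C F x ⊥ = 0 := rfl

lemma quiltOfCut_top (x : P) : quiltOfCut C F x ⊤ = cutLevel C x := rfl

open scoped Classical in
lemma quiltOfCut_mid (x : P) (y : Fin j) :
    quiltOfCut C F x (a2mid y) = if x ∈ F y ∨ cutLevel C x = 2 then 1 else 0 := rfl

lemma quiltOfCut_top_eq_mid_or {y : Fin j} (hF : F y ⊆ C) (x : P) :
    quiltOfCut C F x ⊤ = quiltOfCut C F x (a2mid y) ∨
      quiltOfCut C F x ⊤ = quiltOfCut C F x (a2mid y) + 1 := by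
  rw [quiltOfCut_top, quiltOfCut_mid]
  rcases cutLevel_cases C x with ⟨-, h⟩ | ⟨hx, -, h⟩ | ⟨-, h⟩ <;> rw [h]
  · split_ifs <;> simp
  · simp [mt (@hF x) hx]
  · simp

variable [BoundedOrder P]

lemma quiltOfCut_mid_covBy [Finite P] (hC : IsConvexCut C) {y : Fin j}
    (hF : IsRelUpperSet (F y : Set P) (· ∈ C)) {a b : P} (hab : a ⋖ b) :
    quiltOfCut C F b (a2mid y) = quiltOfCut C F a (a2mid y) ∨
      quiltOfCut C F b (a2mid y) = quiltOfCut C F a (a2mid y) + 1 := by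
  have hlevel := hC.isLevelFunction_cutLevel
  have hup : a ∈ F y ∨ cutLevel C a = 2 → b ∈ F y ∨ cutLevel C b = 2 := by
    have := hlevel.le_two b
    rintro (ha | ha)
    · rcases hlevel.covBy a b hab with hb | hb <;>
        rw [cutLevel_eq_one_iff.2 (hF ha).1] at hb
      · exact Or.inl (hF.mem_of_le ha hab.le (cutLevel_eq_one_iff.1 hb))
      · exact Or.inr hb
    · exact Or.inr (by have := hlevel.monotone hab.le; omega)
  rw [quiltOfCut_mid, quiltOfCut_mid]
  by_cases ha : a ∈ F y ∨ cutLevel C a = 2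
  · simp [ha, hup ha]
  · rw [if_neg ha]
    split_ifs <;> simp

lemma quiltOfCut_isQuilt [Finite P] (rkP : P → ℕ) (hrk : 2 ≤ rkP ⊤) (hj : 1 ≤ j)
    (hC : IsConvexCut C) (hF : ∀ y, IsRelUpperSet (F y : Set P) (· ∈ C)) :
    IsQuilt rkP (rkA2 j) (quiltOfCut C F) := by
  have hlevel := hC.isLevelFunction_cutLevel
  refine ⟨fun q => ?_, fun _ => rfl, ?_, ?_⟩
  · rcases A2.cases q with rfl | rfl | ⟨y, rfl⟩
    · rfl
    · exact hlevel.map_bot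
    · have hbot : ⊥ ∉ F y := fun h => hC.bot_notMem (hF y h).1
      simp [quiltOfCut_mid, hbot, hlevel.map_bot]
  · rw [quiltOfCut_top, hlevel.map_top]
    exact (min_eq_right hrk).symm
  · rintro ⟨a, q⟩ ⟨b, q'⟩ h
    rcases Prod.mk_covBy_mk_iff.1 h with ⟨hab, rfl⟩ | ⟨hqq', rfl⟩
    · rcases A2.cases q with rfl | rfl | ⟨y, rfl⟩
      · exact Or.inl rfl
      · exact hlevel.covBy a b hab
      · exact quiltOfCut_mid_covBy hC (hF y) hab
    · rcases A2.covBy_cases hj hqq' with ⟨rfl, y, rfl⟩ | ⟨⟨y, rfl⟩, rfl⟩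
      · rw [quiltOfCut_mid]
        split_ifs <;> simp
      · exact quiltOfCut_top_eq_mid_or (fun _ hx => (hF y hx).1) a

end QuiltOfCut

section QuiltColumns

variable {P : Type*} [PartialOrder P] [BoundedOrder P] {j : ℕ} {rkP : P → ℕ}
  {f : P → A2 j → ℕ}

lemma IsQuilt.covBy_left (hf : IsQuilt rkP (rkA2 j) f) (q : A2 j) {a b : P} (hab : a ⋖ b) :
    f b q = f a q ∨ f b q = f a q + 1 :=
  hf.2.2.2 (a, q) (b, q) (Prod.mk_covBy_mk_iff_left.2 hab)

lemma IsQuilt.covBy_right (hf : IsQuilt rkP (rkA2 j) f) (x : P) {q q' : A2 j} (h : q ⋖ q') :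
    f x q' = f x q ∨ f x q' = f x q + 1 :=
  hf.2.2.2 (x, q) (x, q') (Prod.mk_covBy_mk_iff_right.2 h)

lemma IsQuilt.monotone [Finite P] (hf : IsQuilt rkP (rkA2 j) f) (q : A2 j) :
    Monotone (f · q) :=
  Finite.monotone_of_forall_covBy fun _ _ hab => by
    rcases hf.covBy_left q hab with h | h <;> omega

lemma IsQuilt.isLevelFunction (hf : IsQuilt rkP (rkA2 j) f) (hrk : 2 ≤ rkP ⊤) :
    IsLevelFunction (f · ⊤) where
  map_bot := hf.1 ⊤
  map_top := hf.2.2.1.trans (min_eq_right hrk)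
  covBy _ _ := hf.covBy_left ⊤

lemma IsQuilt.mid_le_one (hf : IsQuilt rkP (rkA2 j) f) (x : P) (y : Fin j) :
    f x (a2mid y) ≤ 1 := by
  have := hf.2.1 x
  rcases hf.covBy_right x (A2.bot_covBy_mid y) with h | h <;> omega

end QuiltColumns

section CutOfQuilt

variable {P : Type*} [PartialOrder P] [Fintype P] {j : ℕ}

open scoped Classical in
noncomputable def cutOfQuilt (f : P → A2 j → ℕ) : Finset P := {x | f x ⊤ = 1}

open scoped Classical in
noncomputable def filterOfQuilt (f : P → A2 j → ℕ) (y : Fin j) : Finset P :=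
  {x ∈ cutOfQuilt f | f x (a2mid y) = 1}

lemma cutOfQuilt_quiltOfCut (C : Finset P) (F : Fin j → Finset P) :
    cutOfQuilt (quiltOfCut C F) = C := by
  ext x
  rw [cutOfQuilt, Finset.mem_filter_univ]
  exact cutLevel_eq_one_iff

lemma filterOfQuilt_quiltOfCut {C : Finset P} {F : Fin j → Finset P} {y : Fin j}
    (hF : F y ⊆ C) : filterOfQuilt (quiltOfCut C F) y = F y := by
  ext x
  rw [filterOfQuilt, cutOfQuilt_quiltOfCut, Finset.mem_filter, quiltOfCut_mid]
  constructor
  · rintro ⟨hx, h⟩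
    have h2 : cutLevel C x ≠ 2 := by rw [cutLevel_eq_one_iff.2 hx]; omega
    by_contra hxF
    rw [if_neg (not_or.2 ⟨hxF, h2⟩)] at h
    exact zero_ne_one h
  · intro hx
    simp [hF hx, hx]

variable [BoundedOrder P] {rkP : P → ℕ} {f : P → A2 j → ℕ}

lemma IsQuilt.isConvexCut_cutOfQuilt (hf : IsQuilt rkP (rkA2 j) f) (hrk : 2 ≤ rkP ⊤) :
    IsConvexCut (cutOfQuilt f) :=
  (hf.isLevelFunction hrk).isConvexCut

lemma IsQuilt.isRelUpperSet_filterOfQuilt (hf : IsQuilt rkP (rkA2 j) f) (y : Fin j) :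
    IsRelUpperSet (filterOfQuilt f y : Set P) (· ∈ cutOfQuilt f) := by
  intro x hx
  rw [Finset.mem_coe, filterOfQuilt, Finset.mem_filter] at hx
  refine ⟨hx.1, fun z hxz hz => ?_⟩
  have := hf.monotone (a2mid y) hxz
  have := hf.mid_le_one z y
  rw [Finset.mem_coe, filterOfQuilt, Finset.mem_filter]
  exact ⟨hz, by simp only at *; omega⟩

lemma IsQuilt.cutLevel_cutOfQuilt (hf : IsQuilt rkP (rkA2 j) f) (hrk : 2 ≤ rkP ⊤) :
    cutLevel (cutOfQuilt f) = (f · ⊤) :=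
  (hf.isLevelFunction hrk).cutLevel_eq

lemma IsQuilt.quiltOfCut_eq (hf : IsQuilt rkP (rkA2 j) f) (hrk : 2 ≤ rkP ⊤) :
    quiltOfCut (cutOfQuilt f) (filterOfQuilt f) = f := by
  have hlevel := hf.isLevelFunction hrk
  funext x q
  rcases A2.cases q with rfl | rfl | ⟨y, rfl⟩
  · exact (hf.2.1 x).symm
  · exact congrFun (hf.cutLevel_cutOfQuilt hrk) x
  · rw [quiltOfCut_mid, congrFun (hf.cutLevel_cutOfQuilt hrk) x]
    have := hf.mid_le_one x y
    have := hf.covBy_right x (A2.mid_covBy_top y)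
    have := hlevel.le_two x
    simp only [filterOfQuilt, cutOfQuilt, Finset.mem_filter, Finset.mem_univ, true_and]
    split_ifs <;> omega

end CutOfQuilt

section Antichain

variable {P : Type*} [PartialOrder P]

open scoped Classical in
noncomputable def minimalsOf (F : Finset P) : Finset P := {x ∈ F | Minimal (· ∈ F) x}

open scoped Classical in
noncomputable def relUpperClosure (C A : Finset P) : Finset P := {z ∈ C | ∃ a ∈ A, a ≤ z}

lemma mem_minimalsOf {F : Finset P} {x : P} : x ∈ minimalsOf F ↔ Minimal (· ∈ F) x := by
  classical
  rw [minimalsOf, Finset.mem_filter, and_iff_right_of_imp Minimal.prop]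

lemma mem_relUpperClosure {C A : Finset P} {z : P} :
    z ∈ relUpperClosure C A ↔ z ∈ C ∧ ∃ a ∈ A, a ≤ z := by
  classical
  rw [relUpperClosure, Finset.mem_filter]

lemma isAntichain_minimalsOf (F : Finset P) : IsAntichain (· ≤ ·) (minimalsOf F : Set P) :=
  (setOfPred_minimal_antichain _).subset fun _ hx => mem_minimalsOf.1 hx

lemma isRelUpperSet_relUpperClosure (C A : Finset P) :
    IsRelUpperSet (relUpperClosure C A : Set P) (· ∈ C) := fun _ hx =>
  have ⟨hxC, a, ha, hax⟩ := mem_relUpperClosure.1 hx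
  ⟨hxC, fun _ hxz hz => mem_relUpperClosure.2 ⟨hz, a, ha, hax.trans hxz⟩⟩

lemma relUpperClosure_minimalsOf [Finite P] {C F : Finset P}
    (hF : IsRelUpperSet (F : Set P) (· ∈ C)) : relUpperClosure C (minimalsOf F) = F := by
  ext x
  rw [mem_relUpperClosure]
  constructor
  · rintro ⟨hxC, a, ha, hax⟩
    exact hF.mem_of_le (mem_minimalsOf.1 ha).prop hax hxC
  · intro hx
    obtain ⟨a, hax, ha⟩ := exists_minimal_le_of_wellFoundedLT (· ∈ F) x hx
    exact ⟨hF.prop_of_mem hx, a, mem_minimalsOf.2 ha, hax⟩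

lemma minimalsOf_relUpperClosure {C A : Finset P} (hAC : A ⊆ C)
    (hA : IsAntichain (· ≤ ·) (A : Set P)) : minimalsOf (relUpperClosure C A) = A := by
  ext x
  rw [mem_minimalsOf]
  constructor
  · rintro ⟨hx, hmin⟩
    obtain ⟨-, a, ha, hax⟩ := mem_relUpperClosure.1 hx
    have hxa := hmin (mem_relUpperClosure.2 ⟨hAC ha, a, ha, le_rfl⟩) hax
    exact le_antisymm hxa hax ▸ ha
  · intro hx
    refine ⟨mem_relUpperClosure.2 ⟨hAC hx, x, hx, le_rfl⟩, fun z hz hzx => ?_⟩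
    obtain ⟨-, a, ha, haz⟩ := mem_relUpperClosure.1 hz
    exact hA.eq ha hx (haz.trans hzx) ▸ haz

open scoped Classical in
noncomputable def relUpperSetEquivAntichain [Finite P] (C : Finset P) :
    {F : Finset P // IsRelUpperSet (F : Set P) (· ∈ C)} ≃
      {A // A ∈ C.powerset.filter fun A : Finset P => IsAntichain (· ≤ ·) (A : Set P)} where
  toFun F := ⟨minimalsOf F.1, by
    rw [Finset.mem_filter, Finset.mem_powerset]
    exact ⟨fun _ hx => F.2.prop_of_mem (Finset.mem_coe.2 (mem_minimalsOf.1 hx).prop),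
      isAntichain_minimalsOf F.1⟩⟩
  invFun A := ⟨relUpperClosure C A.1, isRelUpperSet_relUpperClosure C A.1⟩
  left_inv F := Subtype.ext (relUpperClosure_minimalsOf F.2)
  right_inv A := Subtype.ext <| by
    have hA := A.2
    rw [Finset.mem_filter, Finset.mem_powerset] at hA
    exact minimalsOf_relUpperClosure hA.1 hA.2

end Antichain

section Count

variable {P : Type*} [PartialOrder P] [BoundedOrder P] [Fintype P] {j : ℕ}

noncomputable def quiltEquiv (rkP : P → ℕ) (hrk : 2 ≤ rkP ⊤) (hj : 1 ≤ j) :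
    {f : P → A2 j → ℕ // IsQuilt rkP (rkA2 j) f} ≃
      {d : Finset P × (Fin j → Finset P) //
        IsConvexCut d.1 ∧ ∀ y, IsRelUpperSet (d.2 y : Set P) (· ∈ d.1)} where
  toFun f := ⟨(cutOfQuilt f.1, filterOfQuilt f.1), f.2.isConvexCut_cutOfQuilt hrk,
    f.2.isRelUpperSet_filterOfQuilt⟩
  invFun d := ⟨quiltOfCut d.1.1 d.1.2, quiltOfCut_isQuilt rkP hrk hj d.2.1 d.2.2⟩
  left_inv f := Subtype.ext (f.2.quiltOfCut_eq hrk)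
  right_inv d := Subtype.ext <| Prod.ext (cutOfQuilt_quiltOfCut d.1.1 d.1.2)
    (funext fun y => filterOfQuilt_quiltOfCut fun _ hx => (d.2.2 y hx).1)

open scoped Classical in
lemma card_relUpperSets_pi (C : Finset P) :
    Nat.card {F : Fin j → Finset P // IsConvexCut C ∧ ∀ y, IsRelUpperSet (F y : Set P) (· ∈ C)} =
      if IsConvexCut C then
        (C.powerset.filter fun A : Finset P => IsAntichain (· ≤ ·) (A : Set P)).card ^ j
      else 0 := by
  split_ifs with hC
  · have e : {F : Fin j → Finset P // IsConvexCut C ∧ ∀ y, IsRelUpperSet (F y : Set P) (· ∈ C)} ≃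
        (Fin j → {F : Finset P // IsRelUpperSet (F : Set P) (· ∈ C)}) :=
      (Equiv.subtypeEquivRight fun _ => and_iff_right hC).trans
        (Equiv.subtypePiEquivPi (p := fun _ (F : Finset P) => IsRelUpperSet (F : Set P) (· ∈ C)))
    rw [Nat.card_congr e, Nat.card_fun, Nat.card_congr (relUpperSetEquivAntichain C),
      Nat.card_eq_finsetCard, Nat.card_fin]
  · have : IsEmpty {F : Fin j → Finset P // IsConvexCut C ∧ ∀ y, IsRelUpperSet (F y : Set P) (· ∈ C)} :=
      ⟨fun F => hC F.2.1⟩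
    exact Nat.card_of_isEmpty

end Count

open scoped Classical in
theorem quilts_antichain_count_general
    {P : Type*} [Fintype P] [PartialOrder P] [BoundedOrder P]
    (rkP : P → ℕ)
    (hrk : 2 ≤ rkP ⊤) (j : ℕ) (hj : 1 ≤ j) :
    Nat.card {f : P → A2 j → ℕ // IsQuilt rkP (rkA2 j) f} =
      ∑ C ∈ Finset.univ.filter (fun C : Finset P =>
          (⊥ : P) ∉ C ∧ (⊤ : P) ∉ C ∧
          (∀ x z y : P, x ∈ C → y ∈ C → x ≤ z → z ≤ y → z ∈ C) ∧
          (∀ S : Set P, IsMaxChain (· ≤ ·) S → ∃ z ∈ S, z ∈ C)),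
        ((C.powerset.filter fun A : Finset P =>
          IsAntichain (· ≤ ·) (A : Set P)).card) ^ j := by
  rw [Nat.card_congr ((quiltEquiv rkP hrk hj).trans (Equiv.subtypeProdEquivSigmaSubtype
    fun C (F : Fin j → Finset P) => IsConvexCut C ∧ ∀ y, IsRelUpperSet (F y : Set P) (· ∈ C))),
    Nat.card_sigma, Finset.sum_filter]
  refine Finset.sum_congr rfl fun C _ => ?_
  rw [card_relUpperSets_pi]
  simp only [isConvexCut_iff]

open scoped Classical in
/-- For a finite ranked poset `P` of rank `k ≥ 2` with least and greatest elements and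
any `j ≥ 1`, the number of quilts of type `(P, A₂(j))` equals the sum, over all convex
cut sets `C ⊆ P \ {⊥, ⊤}`, of `α_P(C)^j`, where `α_P(C)` is the number of antichains
contained in `C`.  (A set is convex if it contains every element between two of its
members, and a cut set if it meets every maximal chain of `P`.) -/
theorem quilts_antichain_count
    {P : Type*} [Fintype P] [PartialOrder P] [BoundedOrder P]
    (rkP : P → ℕ)
    (hP0 : rkP ⊥ = 0) (hPcov : ∀ x y : P, x ⋖ y → rkP y = rkP x + 1)
    (hrk : 2 ≤ rkP ⊤) (j : ℕ) (hj : 1 ≤ j) :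
    Nat.card {f : P → A2 j → ℕ // IsQuilt rkP (rkA2 j) f} =
      ∑ C ∈ Finset.univ.filter (fun C : Finset P =>
          (⊥ : P) ∉ C ∧ (⊤ : P) ∉ C ∧
          (∀ x z y : P, x ∈ C → y ∈ C → x ≤ z → z ≤ y → z ∈ C) ∧
          (∀ S : Set P, IsMaxChain (· ≤ ·) S → ∃ z ∈ S, z ∈ C)),
        ((C.powerset.filter fun A : Finset P =>
          IsAntichain (· ≤ ·) (A : Set P)).card) ^ j :=
  quilts_antichain_count_general rkP hrk j hj
end

section
/- For a finite ranked poset P of rank k with least and greatest elements, the restriction map f ↦ f restricted to P × C_{k−1} is a bijection (indeed a lattice isomorphism) from Quilts(P, C_k) to Quilts(P, C_{k−1}); consequently |Quilts(P, C_k)| = |Quilts(P, C_{k−1})|. -/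
open Function

section Growth

variable {α β : Type*}

def IsRankFunction [Preorder α] (r : α → ℕ) : Prop :=
  ∀ a b, a ⋖ b → r b = r a + 1

def HasBooleanGrowth [Preorder α] (f : α → ℕ) : Prop :=
  ∀ a b, a ⋖ b → f b = f a ∨ f b = f a + 1

theorem IsRankFunction.hasBooleanGrowth [Preorder α] {r : α → ℕ} (hr : IsRankFunction r) :
    HasBooleanGrowth r :=
  fun a b h => Or.inr (hr a b h)

theorem HasBooleanGrowth.comp [Preorder α] [Preorder β] {f : α → ℕ} (hf : HasBooleanGrowth f)
    {g : β → α} (hg : ∀ a b, a ⋖ b → g a ⋖ g b) : HasBooleanGrowth (f ∘ g) :=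
  fun a b h => hf _ _ (hg a b h)

theorem HasBooleanGrowth.monotone_rank_sub [PartialOrder α] [LocallyFiniteOrder α]
    {r f : α → ℕ} (hr : IsRankFunction r) (hf : HasBooleanGrowth f) :
    Monotone fun a => (r a : ℤ) - f a := by
  refine (monotone_iff_forall_covBy _).2 fun a b h => ?_
  rcases hf a b h with hfab | hfab <;> simp only [hr a b h, hfab] <;> push_cast <;> omega

theorem HasBooleanGrowth.add_rank_le [PartialOrder α] [LocallyFiniteOrder α]
    {r f : α → ℕ} (hr : IsRankFunction r) (hf : HasBooleanGrowth f) {a b : α} (hab : a ≤ b) :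
    f b + r a ≤ f a + r b := by
  have := hf.monotone_rank_sub hr hab
  simp only at this
  omega

theorem hasBooleanGrowth_uncurry_iff [PartialOrder α] [PartialOrder β] {F : α → β → ℕ} :
    HasBooleanGrowth (uncurry F) ↔
      (∀ b, HasBooleanGrowth (F · b)) ∧ ∀ a, HasBooleanGrowth (F a) := by
  refine ⟨fun h => ⟨fun b a a' ha => h (a, b) (a', b) (Prod.mk_covBy_mk_iff_left.2 ha),
    fun a b b' hb => h (a, b) (a, b') (Prod.mk_covBy_mk_iff_right.2 hb)⟩, ?_⟩
  rintro ⟨hcol, hrow⟩ ⟨a, b⟩ ⟨a', b'⟩ h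
  rcases Prod.mk_covBy_mk_iff.1 h with ⟨ha, rfl⟩ | ⟨hb, rfl⟩
  exacts [hcol b a a' ha, hrow a b b' hb]

theorem IsRankFunction.prod [PartialOrder α] [PartialOrder β] {r : α → ℕ} {s : β → ℕ}
    (hr : IsRankFunction r) (hs : IsRankFunction s) :
    IsRankFunction fun p : α × β => r p.1 + s p.2 := by
  rintro ⟨a, b⟩ ⟨a', b'⟩ h
  rcases Prod.mk_covBy_mk_iff.1 h with ⟨ha, rfl⟩ | ⟨hb, rfl⟩
  · simp only [hr a a' ha]; omega
  · simp only [hs b b' hb]; omega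

end Growth

theorem isRankFunction_fin_val (n : ℕ) : IsRankFunction fun i : Fin n => (i : ℕ) :=
  fun _ _ h => (Nat.covBy_iff_add_one_eq.1 (Fin.covBy_iff.1 h)).symm

theorem Fin.castSucc_covBy_castSucc_iff {n : ℕ} {i j : Fin n} :
    i.castSucc ⋖ j.castSucc ↔ i ⋖ j := by
  simp only [Fin.covBy_iff, Fin.val_castSucc]

theorem HasBooleanGrowth.snoc {n : ℕ} {h : Fin (n + 1) → ℕ} (hh : HasBooleanGrowth h) {v : ℕ}
    (hv : v = h (Fin.last n) ∨ v = h (Fin.last n) + 1) :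
    HasBooleanGrowth (Fin.snoc h v : Fin (n + 2) → ℕ) := by
  intro i j hij
  induction j using Fin.lastCases with
  | last =>
    obtain rfl : i = (Fin.last n).castSucc := by
      have := Nat.covBy_iff_add_one_eq.1 (Fin.covBy_iff.1 hij)
      ext
      simp only [Fin.val_last, Fin.val_castSucc] at this ⊢
      omega
    simpa using hv
  | cast j =>
    obtain ⟨i, rfl⟩ := Fin.exists_castSucc_eq.2 (hij.lt.trans (Fin.castSucc_lt_last j)).ne
    simpa using hh i j (Fin.castSucc_covBy_castSucc_iff.1 hij)

def extendByRank {P : Type*} (rkP : P → ℕ) {m : ℕ} (g : P → Fin (m + 1) → ℕ) :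
    P → Fin (m + 2) → ℕ :=
  fun x => Fin.snoc (g x) (rkP x)

theorem restrict_extendByRank {P : Type*} (rkP : P → ℕ) {m : ℕ} (g : P → Fin (m + 1) → ℕ) :
    (fun x (i : Fin (m + 1)) => extendByRank rkP g x i.castSucc) = g := by
  simp [extendByRank]

section Quilt

variable {P : Type*} [PartialOrder P] [BoundedOrder P] {rkP : P → ℕ}

theorem isQuilt_iff {Q : Type*} [PartialOrder Q] [BoundedOrder Q] {rkQ : Q → ℕ}
    {f : P → Q → ℕ} :
    IsQuilt rkP rkQ f ↔ (∀ y, f ⊥ y = 0) ∧ (∀ x, f x ⊥ = 0) ∧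
      f ⊤ ⊤ = min (rkP ⊤) (rkQ ⊤) ∧ HasBooleanGrowth (uncurry f) :=
  Iff.rfl

theorem IsQuilt.hasBooleanGrowth {Q : Type*} [PartialOrder Q] [BoundedOrder Q] {rkQ : Q → ℕ}
    {f : P → Q → ℕ} (hf : IsQuilt rkP rkQ f) : HasBooleanGrowth (uncurry f) :=
  hf.2.2.2

variable [LocallyFiniteOrder P] (hP : IsRankFunction rkP)
include hP

section Chain

variable {n : ℕ} {f : P → Fin (n + 1) → ℕ} (hf : IsQuilt rkP (fun i : Fin (n + 1) => (i : ℕ)) f)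
include hf

theorem IsQuilt.add_rank_le {x y : P} {i j : Fin (n + 1)} (hxy : x ≤ y) (hij : i ≤ j) :
    f y j + (rkP x + i) ≤ f x i + (rkP y + j) := by
  classical
  exact hf.hasBooleanGrowth.add_rank_le (hP.prod (isRankFunction_fin_val _))
    (a := (x, i)) (b := (y, j)) ⟨hxy, hij⟩

theorem IsQuilt.le_rank (hP0 : rkP ⊥ = 0) (x : P) (i : Fin (n + 1)) : f x i ≤ rkP x := by
  have := hf.add_rank_le hP (bot_le : ⊥ ≤ x) le_rfl (i := i)
  rw [hf.1, hP0] at this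
  omega

theorem IsQuilt.le_val (x : P) (i : Fin (n + 1)) : f x i ≤ i := by
  have := hf.add_rank_le hP le_rfl (bot_le : ⊥ ≤ i) (x := x)
  rw [hf.2.1] at this
  omega

theorem IsQuilt.min_add_le (x : P) (i : Fin (n + 1)) :
    min (rkP ⊤) n + rkP x + i ≤ f x i + rkP ⊤ + n := by
  have := hf.add_rank_le hP (le_top : x ≤ ⊤) (le_top : i ≤ ⊤)
  rw [hf.2.2.1] at this
  simp only [Fin.val_top] at this
  omega

end Chain

section TopLevel

variable {m : ℕ} (hrk : rkP ⊤ = m + 1)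
include hrk

theorem IsQuilt.apply_last (hP0 : rkP ⊥ = 0) {f : P → Fin (m + 2) → ℕ}
    (hf : IsQuilt rkP (fun i : Fin (m + 2) => (i : ℕ)) f) (x : P) :
    f x (Fin.last (m + 1)) = rkP x := by
  have hle := hf.le_rank hP hP0 x (Fin.last (m + 1))
  have hge := hf.min_add_le hP x (Fin.last (m + 1))
  simp only [hrk, min_self, Fin.val_last] at hge
  omega

theorem IsQuilt.restrict {f : P → Fin (m + 2) → ℕ}
    (hf : IsQuilt rkP (fun i : Fin (m + 2) => (i : ℕ)) f) :
    IsQuilt rkP (fun i : Fin (m + 1) => (i : ℕ)) fun x i => f x i.castSucc := by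
  obtain ⟨hcol, hrow⟩ := hasBooleanGrowth_uncurry_iff.1 hf.hasBooleanGrowth
  refine isQuilt_iff.2 ⟨fun i => hf.1 _, hf.2.1, ?_, hasBooleanGrowth_uncurry_iff.2
    ⟨fun i => hcol i.castSucc, fun x => (hrow x).comp fun _ _ => Fin.castSucc_covBy_castSucc_iff.2⟩⟩
  have hle := hf.le_val hP ⊤ (Fin.last m).castSucc
  have hge := hf.min_add_le hP ⊤ (Fin.last m).castSucc
  simp only [hrk, min_self, Fin.val_castSucc, Fin.val_last, Fin.top_eq_last] at hle hge ⊢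
  omega

theorem IsQuilt.forall_le_iff_restrict (hP0 : rkP ⊥ = 0) {f g : P → Fin (m + 2) → ℕ}
    (hf : IsQuilt rkP (fun i : Fin (m + 2) => (i : ℕ)) f)
    (hg : IsQuilt rkP (fun i : Fin (m + 2) => (i : ℕ)) g) :
    (∀ x i, f x i ≤ g x i) ↔ ∀ x (i : Fin (m + 1)), f x i.castSucc ≤ g x i.castSucc :=
  forall_congr' fun x => Fin.forall_fin_succ'.trans <|
    and_iff_left (by rw [hf.apply_last hP hrk hP0, hg.apply_last hP hrk hP0])

theorem IsQuilt.extendByRank (hP0 : rkP ⊥ = 0) {g : P → Fin (m + 1) → ℕ}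
    (hg : IsQuilt rkP (fun i : Fin (m + 1) => (i : ℕ)) g) :
    IsQuilt rkP (fun i : Fin (m + 2) => (i : ℕ)) (extendByRank rkP g) := by
  obtain ⟨hcol, hrow⟩ := hasBooleanGrowth_uncurry_iff.1 hg.hasBooleanGrowth
  refine isQuilt_iff.2 ⟨fun i => ?_, fun x => ?_, ?_,
    hasBooleanGrowth_uncurry_iff.2 ⟨fun i => ?_, fun x => ?_⟩⟩
  · induction i using Fin.lastCases <;> simp [_root_.extendByRank, hP0, hg.1]
  · exact hg.2.1 x
  · simp [_root_.extendByRank, Fin.top_eq_last, hrk]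
  · induction i using Fin.lastCases
    · simpa [_root_.extendByRank] using hP.hasBooleanGrowth
    · simpa [_root_.extendByRank] using hcol _
  · refine (hrow x).snoc ?_
    have hle := hg.le_rank hP hP0 x (Fin.last m)
    have hge := hg.min_add_le hP x (Fin.last m)
    simp only [hrk, Fin.val_last] at hge
    omega

theorem bijOn_restrict_quilts (hP0 : rkP ⊥ = 0) :
    Set.BijOn (fun (f : P → Fin (m + 2) → ℕ) x (i : Fin (m + 1)) => f x i.castSucc)
      {f | IsQuilt rkP (fun i : Fin (m + 2) => (i : ℕ)) f}
      {g | IsQuilt rkP (fun i : Fin (m + 1) => (i : ℕ)) g} := by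
  refine ⟨fun f hf => hf.restrict hP hrk, fun f hf g hg h => ?_,
    fun g hg => ⟨extendByRank rkP g, hg.extendByRank hP hrk hP0, restrict_extendByRank rkP g⟩⟩
  have hfg := (hf.forall_le_iff_restrict hP hrk hP0 hg).2 fun x i => (congr_fun₂ h x i).le
  have hgf := (hg.forall_le_iff_restrict hP hrk hP0 hf).2 fun x i => (congr_fun₂ h x i).ge
  exact funext₂ fun x i => (hfg x i).antisymm (hgf x i)

end TopLevel

end Quilt

/-- For a finite ranked poset `P` of rank `k = m + 1` with least and greatest elements,
restriction (forgetting the top level of the chain) is a bijection — indeed a lattice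
isomorphism, preserving and reflecting the pointwise order — from `Quilts(P, C_k)` to
`Quilts(P, C_{k-1})`; consequently `|Quilts(P, C_k)| = |Quilts(P, C_{k-1})|`.  Here
`C_n` is realized as `Fin (n + 1)` with rank function `Fin.val`. -/
theorem quilts_chain_restriction
    {P : Type*} [Fintype P] [PartialOrder P] [BoundedOrder P]
    (rkP : P → ℕ) (m : ℕ)
    (hP0 : rkP ⊥ = 0) (hPcov : ∀ x y : P, x ⋖ y → rkP y = rkP x + 1)
    (hrk : rkP ⊤ = m + 1) :
    Set.BijOn (fun (f : P → Fin (m + 2) → ℕ) => fun (x : P) (i : Fin (m + 1)) =>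
        f x i.castSucc)
      {f | IsQuilt rkP (fun i : Fin (m + 2) => (i : ℕ)) f}
      {g | IsQuilt rkP (fun i : Fin (m + 1) => (i : ℕ)) g} ∧
    (∀ f g : P → Fin (m + 2) → ℕ,
      IsQuilt rkP (fun i : Fin (m + 2) => (i : ℕ)) f →
      IsQuilt rkP (fun i : Fin (m + 2) => (i : ℕ)) g →
      ((∀ (x : P) (i : Fin (m + 2)), f x i ≤ g x i) ↔
        (∀ (x : P) (i : Fin (m + 1)), f x i.castSucc ≤ g x i.castSucc))) ∧
    Nat.card {f : P → Fin (m + 2) → ℕ // IsQuilt rkP (fun i : Fin (m + 2) => (i : ℕ)) f} =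
      Nat.card {g : P → Fin (m + 1) → ℕ // IsQuilt rkP (fun i : Fin (m + 1) => (i : ℕ)) g} := by
  classical
  let _ : LocallyFiniteOrder P := Fintype.toLocallyFiniteOrder
  have hbij := bijOn_restrict_quilts hPcov hrk hP0
  exact ⟨hbij, fun f g hf hg => hf.forall_le_iff_restrict hPcov hrk hP0 hg,
    Nat.card_congr (hbij.equiv _)⟩
end
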